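/- arXiv:2006.10002 — 2 statements merged into one kernel-verified Lean document; each statement's English description precedes it below -/
import Mathlib

section
/- Atoms of maximal sequence-length: Let G = (V,E,r) be a connected graph with at least two vertices, and for a ∈ A(G) let ℓ(a) = Σ_{v ∈ V} deg(v)·a_V(v) − Σ_{e ∈ E} a_E(e). An atom a of A(G) satisfies ℓ(a) = 2|E| − |V| + 1 if and only if the support of a is a tree (i.e., |E_a| = |V_a| − 1, the support of an atom being connected) that contains every vertex of G of degree at least 2 (i.e., a_V v = 1 for every v with deg(v) ≥ 2). In particular, the indicator of any spanning tree of G is an atom of maximal sequence-length. -/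
/-- An agglomeration on the graph given by `r : E → Sym2 V`. -/
def IsAgg {V E : Type*} (r : E → Sym2 V) (a : (V → ℕ) × (E → ℕ)) : Prop :=
  ∀ (e : E) (v : V), v ∈ r e → a.2 e ≤ a.1 v

/-- An atom of the monoid of agglomerations. -/
def IsAtomAgg {V E : Type*} (r : E → Sym2 V) (a : (V → ℕ) × (E → ℕ)) : Prop :=
  IsAgg r a ∧ a ≠ 0 ∧
    ∀ b c : (V → ℕ) × (E → ℕ), IsAgg r b → IsAgg r c → a = b + c → b = 0 ∨ c = 0

/-- `AggJoined r E' x y`: `x` and `y` are joined by a walk using only edges in `E'`. -/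
def AggJoined {V E : Type*} (r : E → Sym2 V) (E' : Set E) : V → V → Prop :=
  Relation.ReflTransGen (fun x y => ∃ e ∈ E', r e = s(x, y))

/-!
An atom `a` takes values in `{0, 1}` and has connected support: otherwise
`a = min a 1 + (a - 1)`, or the splitting of `a` along a vertex set closed under the support
edges and its complement, is a proper decomposition. For such an atom the handshake lemma gives
`ℓ(a) = 2|E| - ∑_{v ∉ V_a} deg v - |E_a|`. Every degree is positive and a connected support has
`|E_a| ≥ |V_a| - 1`, so `ℓ(a) ≤ 2|E| - |V| + 1`, with equality exactly when `|E_a| = |V_a| - 1`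
and every vertex outside the support has degree `1`. The indicator of a spanning tree is an
atom because any decomposition of it propagates along the tree edges; its length is then read
off from the equality case.
-/

open Finset

section

variable {V E : Type*} {r : E → Sym2 V}

def EdgeClosed (r : E → Sym2 V) (E' : Set E) (R : Set V) : Prop :=
  ∀ e ∈ E', ∀ v ∈ r e, ∀ w ∈ r e, v ∈ R → w ∈ R

theorem AggJoined.of_mem {E' : Set E} {e : E} (he : e ∈ E') {v w : V} (hv : v ∈ r e)
    (hw : w ∈ r e) : AggJoined r E' v w := by
  by_cases hvw : v = w
  · exact hvw ▸ Relation.ReflTransGen.refl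
  · exact .single ⟨e, he, (Sym2.mem_and_mem_iff hvw).1 ⟨hv, hw⟩⟩

theorem edgeClosed_setOf_aggJoined (E' : Set E) (x : V) :
    EdgeClosed r E' {v | AggJoined r E' x v} :=
  fun _ he _ hv _ hw hxv => hxv.trans (AggJoined.of_mem he hv hw)

theorem AggJoined.mem_of_edgeClosed {E' : Set E} {R : Set V} (hR : EdgeClosed r E' R)
    {x y : V} (h : AggJoined r E' x y) (hx : x ∈ R) : y ∈ R := by
  induction h with
  | refl => exact hx
  | tail _ hstep ih =>
    obtain ⟨e, he, hre⟩ := hstep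
    exact hR e he _ (by simp [hre]) _ (by simp [hre]) ih

theorem card_incident_pos [Finite E] [Nontrivial V] (hconn : ∀ x y : V, AggJoined r Set.univ x y)
    (v : V) : 0 < Nat.card {e : E // v ∈ r e} := by
  obtain ⟨w, hwv⟩ := exists_ne v
  rcases (hconn v w).cases_head with hvw | ⟨_, ⟨e, -, hre⟩, -⟩
  · exact absurd hvw.symm hwv
  · have : Nonempty {e : E // v ∈ r e} := ⟨⟨e, by simp [hre]⟩⟩
    exact Nat.card_pos

theorem sum_card_incident [Fintype V] [Fintype E] (hr : ∀ e : E, ¬ (r e).IsDiag) :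
    ∑ v : V, Nat.card {e : E // v ∈ r e} = 2 * Fintype.card E := by
  classical
  calc ∑ v : V, Nat.card {e : E // v ∈ r e}
      = ∑ v : V, #{e | v ∈ r e} := by simp only [Nat.card_eq_fintype_card, Fintype.card_subtype]
    _ = ∑ e : E, #{v | v ∈ r e} := sum_card_bipartiteAbove_eq_sum_card_bipartiteBelow _
    _ = ∑ e : E, #(r e).toFinset := by congr! with e; ext; simp
    _ = 2 * Fintype.card E := by
      simp [Sym2.card_toFinset_of_not_isDiag _ (hr _), mul_comm]

theorem card_le_card_add_one_of_aggJoined [Finite E] {V' : Set V} {E' : Set E}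
    (hE' : ∀ e ∈ E', ∀ v ∈ r e, v ∈ V') (hV' : ∀ x ∈ V', ∀ y ∈ V', AggJoined r E' x y) :
    Nat.card V' ≤ Nat.card E' + 1 := by
  rcases isEmpty_or_nonempty V' with _ | _
  · simp
  let G : SimpleGraph V' := .fromEdgeSet {z | z.map Subtype.val ∈ r '' E'}
  have hreach : ∀ x y, AggJoined r E' x y → ∀ (hx : x ∈ V') (hy : y ∈ V'),
      G.Reachable ⟨x, hx⟩ ⟨y, hy⟩ := by
    intro x y h
    induction h with
    | refl => exact fun _ _ => .rfl
    | @tail b c _ hstep ih =>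
      obtain ⟨e, he, hre⟩ := hstep
      intro hx hc
      have hb : b ∈ V' := hE' e he b (by simp [hre])
      refine (ih hx hb).trans ?_
      by_cases hbc : b = c
      · subst hbc; rfl
      · refine SimpleGraph.Adj.reachable ?_
        rw [SimpleGraph.fromEdgeSet_adj]
        exact ⟨⟨e, he, by simp [hre]⟩, by simpa using hbc⟩
  have hG : G.Connected := ⟨fun x y => hreach x y (hV' x x.2 y y.2) x.2 y.2⟩
  have hedges : Nat.card G.edgeSet ≤ Nat.card (r '' E') := by
    refine Nat.card_le_card_of_injective (fun z => ⟨z.1.map Subtype.val, ?_⟩) ?_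
    · exact ((SimpleGraph.edgeSet_fromEdgeSet _).le z.2).1
    · intro z₁ z₂ h
      exact Subtype.ext (Sym2.map.injective Subtype.val_injective (congrArg Subtype.val h))
  have := hG.card_vert_le_card_edgeSet_add_one
  have := Nat.card_image_le (f := r) E'.toFinite
  omega

theorem IsAgg.eq_zero_of_fst_eq_zero {a : (V → ℕ) × (E → ℕ)} (ha : IsAgg r a) (h : a.1 = 0) :
    a = 0 := by
  refine Prod.ext h (funext fun e => ?_)
  have := ha e _ (r e).out_fst_mem
  simp_all

theorem IsAgg.indicator {a : (V → ℕ) × (E → ℕ)} (ha : IsAgg r a) (R : Set V) :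
    IsAgg r (R.indicator a.1, {e | ∀ v ∈ r e, v ∈ R}.indicator a.2) := by
  intro e v hv
  dsimp only
  by_cases he : e ∈ {e | ∀ w ∈ r e, w ∈ R}
  · rw [Set.indicator_of_mem he, Set.indicator_of_mem (he v hv)]
    exact ha e v hv
  · rw [Set.indicator_of_notMem he]
    exact Nat.zero_le _

theorem IsAgg.indicator_compl {a : (V → ℕ) × (E → ℕ)} (ha : IsAgg r a) {R : Set V}
    (hR : EdgeClosed r {e | 0 < a.2 e} R) :
    IsAgg r (Rᶜ.indicator a.1, {e | ∀ v ∈ r e, v ∈ R}ᶜ.indicator a.2) := by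
  intro e v hv
  dsimp only
  by_cases he : e ∈ {e | ∀ w ∈ r e, w ∈ R}
  · rw [Set.indicator_of_notMem (Set.notMem_compl_iff.2 he)]
    exact Nat.zero_le _
  rw [Set.indicator_of_mem (Set.mem_compl he)]
  rcases Nat.eq_zero_or_pos (a.2 e) with h0 | hpos
  · rw [h0]
    exact Nat.zero_le _
  obtain ⟨w, hw, hwR⟩ : ∃ w ∈ r e, w ∉ R := by simpa using he
  have hvR : v ∉ R := fun hvR => hwR (hR e hpos v hv w hw hvR)
  rw [Set.indicator_of_mem (show v ∈ Rᶜ from hvR)]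
  exact ha e v hv

theorem IsAtomAgg.le_one {a : (V → ℕ) × (E → ℕ)} (ha : IsAtomAgg r a) : a ≤ 1 := by
  obtain ⟨hagg, hne, hatom⟩ := ha
  have hmin : IsAgg r (fun v => min (a.1 v) 1, fun e => min (a.2 e) 1) :=
    fun e v hv => min_le_min_right 1 (hagg e v hv)
  have hsub : IsAgg r (fun v => a.1 v - 1, fun e => a.2 e - 1) :=
    fun e v hv => Nat.sub_le_sub_right (hagg e v hv) 1
  rcases hatom _ _ hmin hsub (by ext <;> simp <;> omega) with h | h
  · refine absurd (hagg.eq_zero_of_fst_eq_zero (funext fun v => ?_)) hne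
    simpa using congrFun (congrArg Prod.fst h) v
  · have h₁ : ∀ v, a.1 v - 1 = 0 := fun v => by simpa using congrFun (congrArg Prod.fst h) v
    have h₂ : ∀ e, a.2 e - 1 = 0 := fun e => by simpa using congrFun (congrArg Prod.snd h) e
    exact ⟨fun v => Nat.sub_eq_zero_iff_le.mp (h₁ v), fun e => Nat.sub_eq_zero_iff_le.mp (h₂ e)⟩

theorem IsAtomAgg.mem_of_edgeClosed {a : (V → ℕ) × (E → ℕ)} (ha : IsAtomAgg r a) {R : Set V}
    (hR : EdgeClosed r {e | 0 < a.2 e} R) {x : V} (hx : 0 < a.1 x) (hxR : x ∈ R) {y : V}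
    (hy : 0 < a.1 y) : y ∈ R := by
  rcases ha.2.2 _ _ (ha.1.indicator R) (ha.1.indicator_compl hR)
    (by ext <;> simp) with h | h
  · have := congrFun (congrArg Prod.fst h) x
    simp_all
  · by_contra hyR
    have := congrFun (congrArg Prod.fst h) y
    simp_all

theorem IsAtomAgg.aggJoined {a : (V → ℕ) × (E → ℕ)} (ha : IsAtomAgg r a) {x y : V}
    (hx : 0 < a.1 x) (hy : 0 < a.1 y) : AggJoined r {e | 0 < a.2 e} x y :=
  ha.mem_of_edgeClosed (edgeClosed_setOf_aggJoined _ x) hx .refl hy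

theorem isAtomAgg_one_indicator [Nonempty V] {E' : Set E}
    (hE' : ∀ x y : V, AggJoined r E' x y) : IsAtomAgg r (fun _ => 1, E'.indicator 1) := by
  refine ⟨fun e v _ => Set.indicator_apply_le' (fun _ => le_rfl) (fun _ => zero_le_one), ?_, ?_⟩
  · intro h
    simpa using congrFun (congrArg Prod.fst h) (Classical.arbitrary V)
  intro b c hb hc h
  have hV : ∀ v, b.1 v + c.1 v = 1 := fun v => (congrFun (congrArg Prod.fst h) v).symm
  have hE : ∀ e, b.2 e + c.2 e = E'.indicator 1 e :=
    fun e => (congrFun (congrArg Prod.snd h) e).symm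
  -- a vertex carried by `b` forces its `E'`-edges, hence their other endpoints, into `b`
  have hclosed : EdgeClosed r E' {v | 0 < b.1 v} := by
    intro e he v hv w hw (hbv : 0 < b.1 v)
    have hbe : b.2 e + c.2 e = 1 := by simpa [Set.indicator_of_mem he] using hE e
    have := hV v
    have := hc e v hv
    have := hb e w hw
    show 0 < b.1 w
    omega
  by_cases hbx : ∃ x, 0 < b.1 x
  · obtain ⟨x, hx⟩ := hbx
    refine .inr (hc.eq_zero_of_fst_eq_zero (funext fun y => ?_))
    have hby : 0 < b.1 y := (hE' x y).mem_of_edgeClosed hclosed hx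
    have := hV y
    show c.1 y = 0
    omega
  · push Not at hbx
    exact .inl (hb.eq_zero_of_fst_eq_zero (funext fun x => Nat.le_zero.mp (hbx x)))

theorem sum_mul_eq_sum_filter_pos_of_le_one {ι : Type*} [Fintype ι] {f : ι → ℕ}
    (hf : ∀ i, f i ≤ 1) (g : ι → ℤ) :
    ∑ i, g i * f i = ∑ i with 0 < f i, g i := by
  rw [sum_filter]
  refine sum_congr rfl fun i _ => ?_
  rcases Nat.le_one_iff_eq_zero_or_eq_one.mp (hf i) with h | h <;> simp [h]

theorem card_le_sum_of_one_le {ι : Type*} (s : Finset ι) {f : ι → ℕ} (hf : ∀ i ∈ s, 1 ≤ f i) :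
    #s ≤ ∑ i ∈ s, f i ∧ (∑ i ∈ s, f i = #s ↔ ∀ i ∈ s, f i = 1) := by
  rw [card_eq_sum_ones]
  exact ⟨sum_le_sum hf, by rw [eq_comm, sum_eq_sum_iff_of_le hf]; simp [eq_comm]⟩

theorem IsAtomAgg.length_eq_iff [Fintype V] [Fintype E] (hr : ∀ e : E, ¬ (r e).IsDiag)
    (hdeg : ∀ v : V, 0 < Nat.card {e : E // v ∈ r e}) {a : (V → ℕ) × (E → ℕ)}
    (ha : IsAtomAgg r a) :
    (∑ v : V, (Nat.card {e : E // v ∈ r e} : ℤ) * a.1 v) - ∑ e : E, (a.2 e : ℤ)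
        = 2 * (Fintype.card E : ℤ) - (Fintype.card V : ℤ) + 1 ↔
      (Nat.card {e : E // 0 < a.2 e} + 1 = Nat.card {v : V // 0 < a.1 v} ∧
       ∀ v : V, 2 ≤ Nat.card {e : E // v ∈ r e} → a.1 v = 1) := by
  classical
  set S : Finset V := {v | 0 < a.1 v}
  have hle₁ : ∀ v, a.1 v ≤ 1 := fun v => ha.le_one.1 v
  have hle₂ : ∀ e, a.2 e ≤ 1 := fun e => ha.le_one.2 e
  have hlenV : ∑ v : V, (Nat.card {e : E // v ∈ r e} : ℤ) * a.1 v
      = ∑ v ∈ S, Nat.card {e : E // v ∈ r e} := by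
    rw [sum_mul_eq_sum_filter_pos_of_le_one hle₁]
    push_cast
    rfl
  have hlenE : ∑ e : E, (a.2 e : ℤ) = Nat.card {e : E // 0 < a.2 e} := by
    simpa [Nat.card_eq_fintype_card, Fintype.card_subtype] using
      sum_mul_eq_sum_filter_pos_of_le_one hle₂ 1
  have hS : Nat.card {v : V // 0 < a.1 v} = #S := by
    rw [Nat.card_eq_fintype_card, Fintype.card_subtype]
  have hsum : ∑ v ∈ S, Nat.card {e : E // v ∈ r e} + ∑ v ∈ Sᶜ, Nat.card {e : E // v ∈ r e}
      = 2 * Fintype.card E := by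
    rw [sum_add_sum_compl, sum_card_incident hr]
  have hcompl : #S + #Sᶜ = Fintype.card V := by
    rw [card_compl]
    have := card_le_univ S
    omega
  obtain ⟨hout, hout_eq⟩ := card_le_sum_of_one_le Sᶜ fun v _ => hdeg v
  have htree : Nat.card {v : V // 0 < a.1 v} ≤ Nat.card {e : E // 0 < a.2 e} + 1 :=
    card_le_card_add_one_of_aggJoined (V' := {v | 0 < a.1 v}) (E' := {e | 0 < a.2 e})
      (fun e he v hv => lt_of_lt_of_le he (ha.1 e v hv)) fun x hx y hy => ha.aggJoined hx hy
  have hdeg_one : (∀ v ∈ Sᶜ, Nat.card {e : E // v ∈ r e} = 1) ↔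
      ∀ v : V, 2 ≤ Nat.card {e : E // v ∈ r e} → a.1 v = 1 := by
    refine forall_congr' fun v => ?_
    have := hdeg v
    have := hle₁ v
    simp only [S, mem_compl, mem_filter, mem_univ, true_and]
    omega
  rw [hlenV, hlenE, ← hdeg_one, ← hout_eq]
  omega

end

/-- **Atoms of maximal sequence-length**: for a connected graph `G` with at least two
vertices, an atom `a` of `A(G)` satisfies `ℓ(a) = 2|E| − |V| + 1` if and only if the
support of `a` is a tree containing every vertex of degree at least `2`.  In particular,
the indicator of any spanning tree is an atom of maximal sequence-length. -/
theorem davenport_extremal_atoms {V E : Type*} [Fintype V] [Fintype E]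
    (r : E → Sym2 V) (hr : ∀ e : E, ¬ (r e).IsDiag)
    (hconn : ∀ x y : V, AggJoined r Set.univ x y)
    (hV : 2 ≤ Fintype.card V) :
    (∀ a : (V → ℕ) × (E → ℕ), IsAtomAgg r a →
      ((∑ v : V, (Nat.card {e : E // v ∈ r e} : ℤ) * a.1 v) - ∑ e : E, (a.2 e : ℤ)
          = 2 * (Fintype.card E : ℤ) - (Fintype.card V : ℤ) + 1 ↔
        (Nat.card {e : E // 0 < a.2 e} + 1 = Nat.card {v : V // 0 < a.1 v} ∧
         ∀ v : V, 2 ≤ Nat.card {e : E // v ∈ r e} → a.1 v = 1))) ∧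
    (∀ E' : Set E, Nat.card ↥E' + 1 = Fintype.card V →
      (∀ x y : V, AggJoined r E' x y) →
      IsAtomAgg r (fun _ : V => 1, E'.indicator 1) ∧
      (∑ v : V, (Nat.card {e : E // v ∈ r e} : ℤ) * (1 : ℕ))
          - ∑ e : E, ((E'.indicator 1 e : ℕ) : ℤ)
        = 2 * (Fintype.card E : ℤ) - (Fintype.card V : ℤ) + 1) := by
  have : Nontrivial V := Fintype.one_lt_card_iff_nontrivial.mp hV
  have hdeg := card_incident_pos hconn
  refine ⟨fun a ha => ha.length_eq_iff hr hdeg, fun E' hcard hE' => ?_⟩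
  have hatom := isAtomAgg_one_indicator hE'
  refine ⟨hatom, (hatom.length_eq_iff hr hdeg).mpr ⟨?_, fun _ _ => rfl⟩⟩
  have hsupp : {e : E | 0 < E'.indicator 1 e} = E' := by
    ext e
    by_cases he : e ∈ E' <;> simp [he]
  change Nat.card ({e | 0 < E'.indicator 1 e} : Set E) + 1 = Nat.card {v : V // 0 < 1}
  rw [hsupp, hcard]
  simp
end

section
/- Elasticity bound: Let G = (V,E,r) be a graph, let m ≥ 1 and D ≥ 1, and suppose that every connected component of G has at most m vertices (i.e., for every vertex v, the set of vertices joined to v by a walk of edges, including v itself, has cardinality at most m) and that every vertex has degree at most D. If an element a ∈ A(G) can be written both as a sum of k atoms and as a sum of l atoms, with k ≥ 1, then l·D ≤ (m·D − m + 1)·k. (In other words, the elasticity of A(G) is at most m − (m−1)/D.) -/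
/-!
Write `|a|_V` and `|a|_E` for the total vertex and edge weight of an agglomeration. Since every
edge has two distinct endpoints and every vertex at most `D` edges, `2 |c|_E ≤ D |c|_V`; if some
edge weight is positive then `|c|_V ≥ 2`, so every nonzero `c` satisfies `|c|_E + D ≤ D |c|_V`.
Conversely an atom `b` is `0/1`-valued (else `b = b ⊓ 1 + (b - 1)` splits it) and its support is
connected through its positive edges (else restricting to a component splits it). So the support
has at most `m` vertices and at least `|b|_V - 1` positive edges, whence
`D |b|_V ≤ m (D - 1) + 1 + |b|_E`. Summing the lower bound over the `l` atoms of one factorization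
and the upper bound over the `k` atoms of the other, the edge weights cancel.
-/

section

open Finset

variable {V E : Type*} {r : E → Sym2 V}

def vertexWeight [Fintype V] : (V → ℕ) × (E → ℕ) →+ ℕ where
  toFun a := ∑ v, a.1 v
  map_zero' := by simp
  map_add' a b := by simp [sum_add_distrib]

def edgeWeight [Fintype E] : (V → ℕ) × (E → ℕ) →+ ℕ where
  toFun a := ∑ e, a.2 e
  map_zero' := by simp
  map_add' a b := by simp [sum_add_distrib]

lemma Fintype.sum_eq_card_ne_zero_of_le_one {α : Type*} [Fintype α] {f : α → ℕ}
    (hf : f ≤ 1) : ∑ x, f x = Nat.card {x // f x ≠ 0} := by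
  classical
  rw [Nat.card_eq_fintype_card, Fintype.card_subtype, card_filter]
  exact Finset.sum_congr rfl fun x _ => by have := hf x; split_ifs <;> simp_all; omega

lemma AggJoined.mono {F G : Set E} (hFG : F ⊆ G) {x y : V} (h : AggJoined r F x y) :
    AggJoined r G x y :=
  Relation.ReflTransGen.mono (r := fun x y => ∃ e ∈ F, r e = s(x, y))
    (fun _ _ ⟨e, he, hre⟩ => ⟨e, hFG he, hre⟩) _ _ h

lemma card_aggJoined_le [Finite E] (F : Set E) (v₀ : V) :
    Nat.card {w // AggJoined r F v₀ w} ≤ Nat.card F + 1 := by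
  let H : SimpleGraph {w // AggJoined r F v₀ w} :=
    { Adj x y := x ≠ y ∧ ∃ e ∈ F, r e = s(x.1, y.1)
      symm := ⟨fun _ _ ⟨hne, e, he, hre⟩ => ⟨hne.symm, e, he, hre.trans Sym2.eq_swap⟩⟩
      loopless := ⟨fun _ h => h.1 rfl⟩ }
  have hconn : H.Connected := by
    refine (SimpleGraph.connected_iff_exists_forall_reachable H).2 ⟨⟨v₀, .refl⟩, ?_⟩
    rintro ⟨w, hw⟩
    induction hw with
    | refl => rfl
    | @tail x y hx step ih =>
      by_cases hxy : x = y
      · subst hxy; exact ih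
      · exact ih.trans
          (SimpleGraph.Adj.reachable ⟨fun h => hxy (congrArg Subtype.val h), step⟩)
  have hedge : ∀ z ∈ H.edgeSet, ∃ e ∈ F, r e = z.map Subtype.val := by
    intro z
    induction z using Sym2.ind with
    | h x y => exact fun ⟨_, e, he, hre⟩ => ⟨e, he, hre⟩
  choose f hfF hf using hedge
  calc Nat.card {w // AggJoined r F v₀ w} ≤ Nat.card H.edgeSet + 1 :=
        hconn.card_vert_le_card_edgeSet_add_one
    _ ≤ Nat.card F + 1 := by
      gcongr
      refine Nat.card_le_card_of_injective (fun z : H.edgeSet => ⟨f z z.2, hfF _ _⟩) ?_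
      rintro ⟨z, hz⟩ ⟨z', hz'⟩ h
      have hrf : r (f z hz) = r (f z' hz') := by simp only [Subtype.mk.injEq] at h; rw [h]
      rw [hf, hf] at hrf
      exact Subtype.ext (Sym2.map.injective Subtype.val_injective hrf)

noncomputable def aggRestrict (r : E → Sym2 V) (S : Set V) (a : (V → ℕ) × (E → ℕ)) :
    (V → ℕ) × (E → ℕ) :=
  (S.indicator a.1, {e | ∀ v ∈ r e, v ∈ S}.indicator a.2)

lemma isAgg_aggRestrict {a : (V → ℕ) × (E → ℕ)} (ha : IsAgg r a) (S : Set V) :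
    IsAgg r (aggRestrict r S a) := by
  intro e v hv
  by_cases he : ∀ u ∈ r e, u ∈ S
  · simp only [aggRestrict]
    rw [Set.indicator_of_mem (s := {e | ∀ u ∈ r e, u ∈ S}) he, Set.indicator_of_mem (he v hv)]
    exact ha e v hv
  · simp [aggRestrict, Set.indicator_of_notMem, he]

lemma aggRestrict_add_aggRestrict_compl {a : (V → ℕ) × (E → ℕ)} {S : Set V}
    (hS : ∀ e, a.2 e ≠ 0 → ∀ u ∈ r e, ∀ v ∈ r e, u ∈ S → v ∈ S) :
    aggRestrict r S a + aggRestrict r Sᶜ a = a := by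
  refine Prod.ext (funext fun v => Set.indicator_self_add_compl_apply _ _ v) (funext fun e => ?_)
  by_cases h0 : a.2 e = 0
  · simp [aggRestrict, h0]
  obtain ⟨u, hu⟩ : ∃ u, u ∈ r e := ⟨_, Sym2.out_fst_mem _⟩
  simp only [aggRestrict, Prod.snd_add, Pi.add_apply]
  by_cases huS : u ∈ S
  · rw [Set.indicator_of_mem (s := {e | ∀ v ∈ r e, v ∈ S})
        (fun v hv => hS e h0 u hu v hv huS),
      Set.indicator_of_notMem (s := {e | ∀ v ∈ r e, v ∈ Sᶜ}) (fun h => h u hu huS),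
      add_zero]
  · rw [Set.indicator_of_notMem (s := {e | ∀ v ∈ r e, v ∈ S}) (fun h => huS (h u hu)),
      Set.indicator_of_mem (s := {e | ∀ v ∈ r e, v ∈ Sᶜ})
        (fun v hv hvS => huS (hS e h0 v hv u hu hvS)), zero_add]

namespace IsAgg

variable {a : (V → ℕ) × (E → ℕ)}

lemma eq_zero_of_fst_eq_zero_s9 (ha : IsAgg r a) (h : a.1 = 0) : a = 0 := by
  refine Prod.ext h (funext fun e => ?_)
  simpa [h] using ha e _ (Sym2.out_fst_mem (r e))

lemma exists_fst_ne_zero (ha : IsAgg r a) (h : a ≠ 0) : ∃ v, a.1 v ≠ 0 := by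
  by_contra! hv
  exact h (ha.eq_zero_of_fst_eq_zero_s9 (funext hv))

lemma inf_one (ha : IsAgg r a) : IsAgg r (a ⊓ 1) :=
  fun e v hv => min_le_min_right 1 (ha e v hv)

lemma tsub_one (ha : IsAgg r a) : IsAgg r (a - 1) :=
  fun e v hv => Nat.sub_le_sub_right (ha e v hv) 1

variable [Fintype V]

lemma two_le_vertexWeight (hr : ∀ e, ¬ (r e).IsDiag) (ha : IsAgg r a) {e : E}
    (he : a.2 e ≠ 0) : 2 ≤ vertexWeight a := by
  classical
  calc 2 = ∑ v ∈ (r e).toFinset, 1 := by simp [Sym2.card_toFinset_of_not_isDiag _ (hr e)]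
    _ ≤ ∑ v ∈ (r e).toFinset, a.1 v :=
        sum_le_sum fun v hv => by have := ha e v (Sym2.mem_toFinset.1 hv); omega
    _ ≤ ∑ v, a.1 v := sum_le_sum_of_subset (subset_univ _)

variable [Fintype E]

lemma two_mul_edgeWeight_le (hr : ∀ e, ¬ (r e).IsDiag) {D : ℕ}
    (hdeg : ∀ v : V, Nat.card {e : E // v ∈ r e} ≤ D) (ha : IsAgg r a) :
    2 * edgeWeight a ≤ D * vertexWeight a := by
  classical
  calc 2 * ∑ e, a.2 e = ∑ e, ∑ v ∈ (r e).toFinset, a.2 e := by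
        simp [Sym2.card_toFinset_of_not_isDiag _ (hr _), mul_sum]
    _ = ∑ v, ∑ e with v ∈ r e, a.2 e := sum_comm' (by simp)
    _ ≤ ∑ v, ∑ e with v ∈ r e, a.1 v := by
        gcongr with v _ e he
        exact ha e v (mem_filter.1 he).2
    _ ≤ ∑ v, D * a.1 v := by
        gcongr with v
        rw [sum_const, smul_eq_mul, ← Fintype.card_subtype, ← Nat.card_eq_fintype_card]
        exact Nat.mul_le_mul_right _ (hdeg v)
    _ = D * ∑ v, a.1 v := (mul_sum _ _ _).symm

lemma edgeWeight_add_le (hr : ∀ e, ¬ (r e).IsDiag) {D : ℕ}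
    (hdeg : ∀ v : V, Nat.card {e : E // v ∈ r e} ≤ D) (ha : IsAgg r a) (hne : a ≠ 0) :
    edgeWeight a + D ≤ D * vertexWeight a := by
  have h2 := ha.two_mul_edgeWeight_le hr hdeg
  obtain ⟨v, hv⟩ := ha.exists_fst_ne_zero hne
  have h1 : 1 ≤ vertexWeight a :=
    (Nat.one_le_iff_ne_zero.2 hv).trans (single_le_sum (fun _ _ => Nat.zero_le _) (mem_univ v))
  by_cases hE : edgeWeight a = 0
  · rw [hE, zero_add]
    exact Nat.le_mul_of_pos_right D h1
  · obtain ⟨e, he⟩ : ∃ e, a.2 e ≠ 0 := by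
      by_contra! h
      exact hE (sum_eq_zero fun e _ => h e)
    have := ha.two_le_vertexWeight hr he
    nlinarith

end IsAgg

namespace IsAtomAgg

variable {b : (V → ℕ) × (E → ℕ)}

lemma le_one_s9 (hb : IsAtomAgg r b) : b ≤ 1 := by
  obtain ⟨hagg, hne, hsplit⟩ := hb
  have hsum : b = b ⊓ 1 + (b - 1) := by
    refine Prod.ext (funext fun v => ?_) (funext fun e => ?_) <;> simp <;> omega
  rcases hsplit _ _ hagg.inf_one hagg.tsub_one hsum with h | h
  · refine absurd (hagg.eq_zero_of_fst_eq_zero_s9 (funext fun v => ?_)) hne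
    have := congrArg (fun c => c.1 v) h
    simp at this
    omega
  · exact tsub_eq_zero_iff_le.1 h

lemma aggJoined_s9 (hb : IsAtomAgg r b) {u w : V} (hu : b.1 u ≠ 0) (hw : b.1 w ≠ 0) :
    AggJoined r {e | b.2 e ≠ 0} u w := by
  obtain ⟨hagg, -, hsplit⟩ := hb
  set S := {w | AggJoined r {e | b.2 e ≠ 0} u w}
  have hS : ∀ e, b.2 e ≠ 0 → ∀ x ∈ r e, ∀ y ∈ r e, x ∈ S → y ∈ S := by
    intro e he x hx y hy hxS
    by_cases hxy : x = y
    · exact hxy ▸ hxS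
    · exact hxS.tail ⟨e, he, (Sym2.mem_and_mem_iff hxy).1 ⟨hx, hy⟩⟩
  rcases hsplit _ _ (isAgg_aggRestrict hagg S) (isAgg_aggRestrict hagg Sᶜ)
    (aggRestrict_add_aggRestrict_compl hS).symm with h | h
  · have := congrArg (fun c => c.1 u) h
    simp [aggRestrict, Set.indicator_of_mem (show u ∈ S from .refl)] at this
    exact absurd this hu
  · by_contra hwS
    have := congrArg (fun c => c.1 w) h
    simp [aggRestrict, Set.indicator_of_mem (show w ∈ Sᶜ from hwS)] at this
    exact hw this

lemma mul_vertexWeight_le [Fintype V] [Fintype E] (hb : IsAtomAgg r b) {m : ℕ}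
    (hcomp : ∀ v, Nat.card {w // AggJoined r Set.univ v w} ≤ m) (D : ℕ) :
    D * vertexWeight b ≤ m * D - m + 1 + edgeWeight b := by
  obtain ⟨v₀, hv₀⟩ := hb.1.exists_fst_ne_zero hb.2.1
  have hV : vertexWeight b = Nat.card {v // b.1 v ≠ 0} :=
    Fintype.sum_eq_card_ne_zero_of_le_one hb.le_one_s9.1
  have hE : edgeWeight b = Nat.card {e // b.2 e ≠ 0} :=
    Fintype.sum_eq_card_ne_zero_of_le_one hb.le_one_s9.2
  have hsupp : {v | b.1 v ≠ 0} ⊆ {w | AggJoined r {e | b.2 e ≠ 0} v₀ w} :=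
    fun w hw => hb.aggJoined_s9 hv₀ hw
  have hm : Nat.card {v // b.1 v ≠ 0} ≤ m :=
    (Nat.card_mono (Set.toFinite _)
      (hsupp.trans fun w hw => AggJoined.mono (Set.subset_univ _) hw)).trans (hcomp v₀)
  have hedges : Nat.card {v // b.1 v ≠ 0} ≤ Nat.card {e // b.2 e ≠ 0} + 1 :=
    (Nat.card_mono (Set.toFinite _) hsupp).trans (card_aggJoined_le _ v₀)
  rw [hV, hE]
  rcases D with _ | D
  · simp
  · have : m * (D + 1) - m = m * D := by rw [Nat.mul_succ, Nat.add_sub_cancel]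
    rw [this]
    nlinarith

end IsAtomAgg

end

theorem elasticity_bound_general {V E : Type*} [Fintype V] [Fintype E]
    (r : E → Sym2 V) (hr : ∀ e : E, ¬ (r e).IsDiag)
    (m D : ℕ)
    (hcomp : ∀ v : V, Nat.card {w : V // AggJoined r Set.univ v w} ≤ m)
    (hdeg : ∀ v : V, Nat.card {e : E // v ∈ r e} ≤ D)
    (a : (V → ℕ) × (E → ℕ))
    (k l : ℕ)
    (hka : ∃ b : Fin k → (V → ℕ) × (E → ℕ), (∀ i, IsAtomAgg r (b i)) ∧ a = ∑ i, b i)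
    (hla : ∃ c : Fin l → (V → ℕ) × (E → ℕ), (∀ i, IsAtomAgg r (c i)) ∧ a = ∑ i, c i) :
    l * D ≤ (m * D - m + 1) * k := by
  obtain ⟨b, hb, rfl⟩ := hka
  obtain ⟨c, hc, hbc⟩ := hla
  have hupper :
      D * vertexWeight (∑ i, b i) ≤ (m * D - m + 1) * k + edgeWeight (∑ i, b i) := by
    simp only [map_sum, Finset.mul_sum]
    calc ∑ i, D * vertexWeight (b i) ≤ ∑ i, (m * D - m + 1 + edgeWeight (b i)) :=
          Finset.sum_le_sum fun i _ => (hb i).mul_vertexWeight_le hcomp D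
      _ = _ := by simp [Finset.sum_add_distrib, mul_comm]
  have hlower : edgeWeight (∑ i, c i) + l * D ≤ D * vertexWeight (∑ i, c i) := by
    simp only [map_sum, Finset.mul_sum]
    calc ∑ i, edgeWeight (c i) + l * D = ∑ i, (edgeWeight (c i) + D) := by
          simp [Finset.sum_add_distrib]
      _ ≤ _ := Finset.sum_le_sum fun i _ =>
          (hc i).1.edgeWeight_add_le hr hdeg (hc i).2.1
  rw [hbc] at hupper
  omega

/-- **Elasticity bound**: if every connected component of `G` has at most `m` vertices and
every vertex has degree at most `D`, and `a ∈ A(G)` is both a sum of `k ≥ 1` atoms and a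
sum of `l` atoms, then `l·D ≤ (m·D − m + 1)·k`; i.e. `ρ(A(G)) ≤ m − (m−1)/D`. -/
theorem elasticity_bound {V E : Type*} [Fintype V] [Fintype E]
    (r : E → Sym2 V) (hr : ∀ e : E, ¬ (r e).IsDiag)
    (m D : ℕ) (hm : 1 ≤ m) (hD : 1 ≤ D)
    (hcomp : ∀ v : V, Nat.card {w : V // AggJoined r Set.univ v w} ≤ m)
    (hdeg : ∀ v : V, Nat.card {e : E // v ∈ r e} ≤ D)
    (a : (V → ℕ) × (E → ℕ)) (ha : IsAgg r a)
    (k l : ℕ) (hk : 1 ≤ k)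
    (hka : ∃ b : Fin k → (V → ℕ) × (E → ℕ), (∀ i, IsAtomAgg r (b i)) ∧ a = ∑ i, b i)
    (hla : ∃ c : Fin l → (V → ℕ) × (E → ℕ), (∀ i, IsAtomAgg r (c i)) ∧ a = ∑ i, c i) :
    l * D ≤ (m * D - m + 1) * k :=
  elasticity_bound_general r hr m D hcomp hdeg a k l hka hla
end
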